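/- Every subgraph of a fan admits a circle-contact representation in which, for each circle representing a vertex other than the center, the vertical strip containing that circle is empty above the circle. Precisely: let n ≥ 1 and let Fₙ be the fan graph on vertex set Fin (n+1) in which vertex 0 (the center) is adjacent to every vertex i with 1 ≤ i ≤ n, and vertices i and i+1 are adjacent for 1 ≤ i ≤ n−1. Let G be any simple graph on Fin (n+1) with G.Adj ≤ Fₙ.Adj. Then there exist maps c : Fin (n+1) → ℝ² and r : Fin (n+1) → ℝ with r v > 0 for all v, such that for all distinct u, v, dist(c u, c v) ≥ r u + r v with equality if and only if u and v are adjacent in G, and additionally for every vertex v ≠ 0 and every vertex u ≠ v, the closed disk closedBall(c u, r u) is disjoint from the region {p ∈ ℝ² : |p₁ − (c v)₁| ≤ r v, p₂ > (c v)₂, and dist(p, c v) > r v} (the part of the vertical strip of the circle of v lying above that circle). -/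

import Mathlib

/-- The fan graph on `Fin (n+1)`: vertex `0` (the center) is adjacent to every other
vertex, and vertices `i`, `i+1` are adjacent for `1 ≤ i ≤ n-1`. -/
def fanGraph (n : ℕ) : SimpleGraph (Fin (n + 1)) :=
  SimpleGraph.fromRel fun u v => u = 0 ∨ (1 ≤ (u : ℕ) ∧ (v : ℕ) = (u : ℕ) + 1)

/-!
The center is a disk of radius `ρ` lying below the `x`-axis and touching it at the origin; the
rim vertices are disks centered on the `x`-axis, placed from left to right (rim vertex `k + 1` is
the `k`-th disk). A disk with left end `b ∈ (0, ρ)` and radius `r` touches the center disk iff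
`(b + r)² + ρ² = (ρ + r)²`, i.e. `r = b² / (2 (ρ - b))`; half that radius keeps it strictly away.
Consecutive rim disks touch or leave a unit gap, as `G` prescribes. For `ρ` of order `n²` all
radii stay below `1 / 2`, so every left end lies in `(0, ρ)`. Since the rim disks occupy disjoint
`x`-intervals and the center disk lies below the axis, nothing meets the strip above a rim disk.
-/

open Metric

lemma EuclideanSpace.dist_sq_eq_fin_two (p q : EuclideanSpace ℝ (Fin 2)) :
    dist p q ^ 2 = (p 0 - q 0) ^ 2 + (p 1 - q 1) ^ 2 := by
  simp [EuclideanSpace.dist_sq_eq, Fin.sum_univ_two, Real.dist_eq, sq_abs]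

lemma EuclideanSpace.dist_sq_vec_fin_two (a b c d : ℝ) :
    dist !₂[a, b] !₂[c, d] ^ 2 = (a - c) ^ 2 + (b - d) ^ 2 :=
  EuclideanSpace.dist_sq_eq_fin_two _ _

lemma disjoint_closedBall_halfPlane_above (c : EuclideanSpace ℝ (Fin 2)) (s : ℝ) :
    Disjoint (closedBall c s) {p | c 1 + s < p 1} := by
  refine Set.disjoint_left.2 fun p hp (hp' : c 1 + s < p 1) => ?_
  have := (abs_le.1 <| (Real.dist_eq _ _ ▸ PiLp.dist_apply_le p c 1).trans
    (mem_closedBall.1 hp)).2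
  linarith

lemma disjoint_closedBall_strip_above {c : EuclideanSpace ℝ (Fin 2)} {s y t : ℝ}
    (hsep : c 0 + s ≤ y - t ∨ y + t ≤ c 0 - s) :
    Disjoint (closedBall c s) {p | |p 0 - y| ≤ t ∧ c 1 < p 1} := by
  refine Set.disjoint_left.2 fun p hp ⟨hpy, hpc⟩ => ?_
  have hs : 0 ≤ s := dist_nonneg.trans (mem_closedBall.1 hp)
  have hdist : (p 0 - c 0) ^ 2 + (p 1 - c 1) ^ 2 ≤ s ^ 2 := by
    rw [← EuclideanSpace.dist_sq_eq_fin_two]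
    exact pow_le_pow_left₀ dist_nonneg (mem_closedBall.1 hp) 2
  obtain ⟨hx₁, hx₂⟩ := abs_lt_of_sq_lt_sq' (a := p 0 - c 0)
    (by nlinarith [pow_pos (sub_pos.2 hpc) 2]) hs
  rcases hsep with h | h <;> rw [abs_le] at hpy <;> linarith

def DiskContactIff (c₁ : EuclideanSpace ℝ (Fin 2)) (r₁ : ℝ) (c₂ : EuclideanSpace ℝ (Fin 2))
    (r₂ : ℝ) (P : Prop) : Prop :=
  r₁ + r₂ ≤ dist c₁ c₂ ∧ (dist c₁ c₂ = r₁ + r₂ ↔ P)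

section DiskContactIff

variable {c₁ c₂ : EuclideanSpace ℝ (Fin 2)} {r₁ r₂ : ℝ} {P Q : Prop}

lemma DiskContactIff.symm (h : DiskContactIff c₁ r₁ c₂ r₂ P) : DiskContactIff c₂ r₂ c₁ r₁ P := by
  rwa [DiskContactIff, dist_comm, add_comm]

lemma DiskContactIff.of_iff (h : DiskContactIff c₁ r₁ c₂ r₂ P) (hPQ : P ↔ Q) :
    DiskContactIff c₁ r₁ c₂ r₂ Q :=
  ⟨h.1, h.2.trans hPQ⟩

lemma diskContactIff_of_sq (hr : 0 ≤ r₁ + r₂) (hle : (r₁ + r₂) ^ 2 ≤ dist c₁ c₂ ^ 2)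
    (heq : dist c₁ c₂ ^ 2 = (r₁ + r₂) ^ 2 ↔ P) : DiskContactIff c₁ r₁ c₂ r₂ P :=
  ⟨(sq_le_sq₀ hr dist_nonneg).1 hle, by rwa [← sq_eq_sq₀ dist_nonneg hr]⟩

end DiskContactIff

noncomputable def spokeRadius (ρ b : ℝ) (t : Prop) [Decidable t] : ℝ :=
  b ^ 2 / ((if t then 2 else 4) * (ρ - b))

section spokeRadius

variable {ρ b : ℝ} (t : Prop) [Decidable t]

lemma spokeRadius_pos (hb : 0 < b) (hbρ : b < ρ) : 0 < spokeRadius ρ b t := by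
  have : 0 < ρ - b := sub_pos.2 hbρ
  unfold spokeRadius
  split_ifs <;> positivity

lemma spokeRadius_le_half (hb : 0 < b) (hρ : b + b ^ 2 ≤ ρ) : spokeRadius ρ b t ≤ 1 / 2 := by
  have : 0 < ρ - b := by nlinarith
  unfold spokeRadius
  split_ifs <;> rw [div_le_div_iff₀ (by positivity) two_pos] <;> nlinarith

lemma spokeRadius_contact (hb : 0 < b) (hbρ : b < ρ) :
    DiskContactIff !₂[0, -ρ] ρ !₂[b + spokeRadius ρ b t, 0] (spokeRadius ρ b t) t := by
  have hρb : ρ - b ≠ 0 := (sub_pos.2 hbρ).ne'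
  have key : dist !₂[0, -ρ] !₂[b + spokeRadius ρ b t, 0] ^ 2 - (ρ + spokeRadius ρ b t) ^ 2
      = if t then 0 else b ^ 2 / 2 := by
    rw [EuclideanSpace.dist_sq_vec_fin_two, spokeRadius]
    split_ifs <;> field_simp <;> ring
  refine diskContactIff_of_sq (by linarith [spokeRadius_pos t hb hbρ]) ?_ ?_
  · split_ifs at key <;> nlinarith
  · rw [← sub_eq_zero, key]
    split_ifs with ht
    · simp [ht]
    · simp [ht, hb.ne']

end spokeRadius

section FanLayout

variable (ρ : ℝ) (spoke link : ℕ → Prop) [DecidablePred spoke] [DecidablePred link]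

/-- Left end of the `i`-th rim disk. -/
noncomputable def fanLeft : ℕ → ℝ
  | 0 => 1
  | i + 1 => fanLeft i + 2 * spokeRadius ρ (fanLeft i) (spoke i) + if link i then 0 else 1

noncomputable def fanRadius (i : ℕ) : ℝ := spokeRadius ρ (fanLeft ρ spoke link i) (spoke i)

noncomputable def fanCenter (i : ℕ) : EuclideanSpace ℝ (Fin 2) :=
  !₂[fanLeft ρ spoke link i + fanRadius ρ spoke link i, 0]

variable {ρ spoke link}

lemma fanLeft_succ (i : ℕ) : fanLeft ρ spoke link (i + 1) =
    fanLeft ρ spoke link i + 2 * fanRadius ρ spoke link i + if link i then 0 else 1 := rfl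

lemma fanLeft_mem_Icc {N i : ℕ} (hρ : (2 * N + 1 : ℝ) + (2 * N + 1) ^ 2 ≤ ρ) (hi : i ≤ N) :
    fanLeft ρ spoke link i ∈ Set.Icc 1 (2 * i + 1 : ℝ) := by
  induction i with
  | zero => norm_num [fanLeft]
  | succ i ih =>
    obtain ⟨h₁, h₂⟩ := ih (by omega)
    have hiN : (i : ℝ) + 1 ≤ N := by exact_mod_cast hi
    have hb : fanLeft ρ spoke link i + fanLeft ρ spoke link i ^ 2 ≤ ρ := by nlinarith
    have hr₀ := spokeRadius_pos (spoke i) (by linarith) (by nlinarith : fanLeft ρ spoke link i < ρ)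
    have hr₁ := spokeRadius_le_half (spoke i) (by linarith) hb
    rw [fanLeft_succ, fanRadius]
    push_cast
    constructor <;> split_ifs <;> linarith

lemma fanLeft_mem_Ioo {N i : ℕ} (hρ : (2 * N + 1 : ℝ) + (2 * N + 1) ^ 2 ≤ ρ) (hi : i ≤ N) :
    fanLeft ρ spoke link i ∈ Set.Ioo 0 ρ := by
  obtain ⟨h₁, h₂⟩ := fanLeft_mem_Icc (spoke := spoke) (link := link) hρ hi
  have hiN : (i : ℝ) ≤ N := by exact_mod_cast hi
  constructor <;> nlinarith

lemma fanRadius_pos {N i : ℕ} (hρ : (2 * N + 1 : ℝ) + (2 * N + 1) ^ 2 ≤ ρ) (hi : i ≤ N) :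
    0 < fanRadius ρ spoke link i :=
  spokeRadius_pos _ (fanLeft_mem_Ioo hρ hi).1 (fanLeft_mem_Ioo hρ hi).2

lemma fanLeft_gap {N i j : ℕ} (hρ : (2 * N + 1 : ℝ) + (2 * N + 1) ^ 2 ≤ ρ) (hij : i < j)
    (hj : j ≤ N) :
    fanLeft ρ spoke link i + 2 * fanRadius ρ spoke link i ≤ fanLeft ρ spoke link j ∧
      (fanLeft ρ spoke link j = fanLeft ρ spoke link i + 2 * fanRadius ρ spoke link i ↔
        j = i + 1 ∧ link i) := by
  induction j, hij using Nat.le_induction with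
  | base =>
    rw [fanLeft_succ]
    by_cases h : link i <;> simp [h]
  | succ j hij ih =>
    have hr := fanRadius_pos (spoke := spoke) (link := link) (i := j) hρ (by omega)
    have hlt : fanLeft ρ spoke link i + 2 * fanRadius ρ spoke link i <
        fanLeft ρ spoke link (j + 1) := by
      rw [fanLeft_succ]
      split_ifs <;> linarith [(ih (by omega)).1]
    exact ⟨hlt.le, iff_of_false hlt.ne' (by omega)⟩

lemma fanCenter_contact_center {N i : ℕ} (hρ : (2 * N + 1 : ℝ) + (2 * N + 1) ^ 2 ≤ ρ)
    (hi : i ≤ N) :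
    DiskContactIff !₂[0, -ρ] ρ (fanCenter ρ spoke link i) (fanRadius ρ spoke link i) (spoke i) :=
  spokeRadius_contact _ (fanLeft_mem_Ioo hρ hi).1 (fanLeft_mem_Ioo hρ hi).2

lemma fanCenter_contact {N i j : ℕ} (hρ : (2 * N + 1 : ℝ) + (2 * N + 1) ^ 2 ≤ ρ) (hij : i < j)
    (hj : j ≤ N) :
    DiskContactIff (fanCenter ρ spoke link i) (fanRadius ρ spoke link i)
      (fanCenter ρ spoke link j) (fanRadius ρ spoke link j) (j = i + 1 ∧ link i) := by
  obtain ⟨hle, heq⟩ := fanLeft_gap (spoke := spoke) (link := link) hρ hij hj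
  have hri := fanRadius_pos (spoke := spoke) (link := link) hρ (hij.le.trans hj)
  have hrj := fanRadius_pos (spoke := spoke) (link := link) hρ hj
  have hdist : dist (fanCenter ρ spoke link i) (fanCenter ρ spoke link j) =
      fanLeft ρ spoke link j + fanRadius ρ spoke link j -
        (fanLeft ρ spoke link i + fanRadius ρ spoke link i) := by
    rw [← sq_eq_sq₀ dist_nonneg (by linarith), fanCenter, fanCenter,
      EuclideanSpace.dist_sq_vec_fin_two]
    ring
  rw [DiskContactIff, hdist, ← heq]
  constructor <;> [linarith; constructor <;> intro <;> linarith]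

lemma fanCenter_disjoint_strip {N i j : ℕ} (hρ : (2 * N + 1 : ℝ) + (2 * N + 1) ^ 2 ≤ ρ)
    (hij : i ≠ j) (hi : i ≤ N) (hj : j ≤ N) :
    Disjoint (closedBall (fanCenter ρ spoke link i) (fanRadius ρ spoke link i))
      {p | |p 0 - fanCenter ρ spoke link j 0| ≤ fanRadius ρ spoke link j ∧
        fanCenter ρ spoke link j 1 < p 1} := by
  apply disjoint_closedBall_strip_above
  simp only [fanCenter, PiLp.toLp_apply, Matrix.cons_val_zero]
  rcases hij.lt_or_gt with h | h
  · exact .inl (by linarith [(fanLeft_gap (spoke := spoke) (link := link) hρ h hj).1])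
  · exact .inr (by linarith [(fanLeft_gap (spoke := spoke) (link := link) hρ h hi).1])

end FanLayout

section FanGraph

variable {n : ℕ}

lemma fanGraph_adj_succ_succ {i j : Fin n} (h : (fanGraph n).Adj i.succ j.succ) :
    (j : ℕ) = i + 1 ∨ (i : ℕ) = j + 1 := by
  simp only [fanGraph, SimpleGraph.fromRel_adj, Fin.succ_ne_zero, false_or, Fin.val_succ] at h
  omega

def fanSpokeAt (G : SimpleGraph (Fin (n + 1))) (k : ℕ) : Prop :=
  ∀ h : k < n, G.Adj 0 (Fin.succ ⟨k, h⟩)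

def fanRimAt (G : SimpleGraph (Fin (n + 1))) (k : ℕ) : Prop :=
  ∀ h : k + 1 < n, G.Adj (Fin.succ ⟨k, k.lt_succ_self.trans h⟩) (Fin.succ ⟨k + 1, h⟩)

lemma adj_zero_succ_iff_fanSpokeAt (G : SimpleGraph (Fin (n + 1))) (i : Fin n) :
    G.Adj 0 i.succ ↔ fanSpokeAt G i :=
  ⟨fun h _ => h, fun h => h i.2⟩

lemma adj_succ_succ_iff_fanRimAt {G : SimpleGraph (Fin (n + 1))}
    (hG : ∀ u v, G.Adj u v → (fanGraph n).Adj u v) {i j : Fin n} (hij : i < j) :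
    G.Adj i.succ j.succ ↔ (j : ℕ) = i + 1 ∧ fanRimAt G i := by
  constructor
  · intro h
    have hj : (j : ℕ) = i + 1 := (fanGraph_adj_succ_succ (hG _ _ h)).resolve_right (by omega)
    refine ⟨hj, fun _ => ?_⟩
    convert h
    exact hj.symm
  · rintro ⟨hj, h⟩
    convert h (hj ▸ j.2)

end FanGraph

theorem subgraph_of_fan_circle_contact_empty_strips_general
    (n : ℕ) (G : SimpleGraph (Fin (n + 1)))
    (hG : ∀ u v, G.Adj u v → (fanGraph n).Adj u v) :
    ∃ (c : Fin (n + 1) → EuclideanSpace ℝ (Fin 2)) (r : Fin (n + 1) → ℝ),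
      (∀ v, 0 < r v) ∧
      (∀ u v, u ≠ v →
        r u + r v ≤ dist (c u) (c v) ∧ (dist (c u) (c v) = r u + r v ↔ G.Adj u v)) ∧
      (∀ v, v ≠ 0 → ∀ u, u ≠ v →
        Disjoint (Metric.closedBall (c u) (r u))
          {p : EuclideanSpace ℝ (Fin 2) |
            |p 0 - c v 0| ≤ r v ∧ c v 1 < p 1 ∧ r v < dist p (c v)}) := by
  classical
  set ρ : ℝ := (2 * n + 1) + (2 * n + 1) ^ 2 with hρ
  set c : Fin (n + 1) → EuclideanSpace ℝ (Fin 2) :=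
    Fin.cons !₂[0, -ρ] fun i => fanCenter ρ (fanSpokeAt G) (fanRimAt G) i
  set r : Fin (n + 1) → ℝ := Fin.cons ρ fun i => fanRadius ρ (fanSpokeAt G) (fanRimAt G) i
  refine ⟨c, r, Fin.cases (by simp only [r, Fin.cons_zero]; positivity)
    fun i => by simpa [r] using fanRadius_pos hρ.ge i.2.le, fun u v huv => ?_,
    fun v hv u huv => ?_⟩
  · show DiskContactIff (c u) (r u) (c v) (r v) (G.Adj u v)
    wlog h : u < v generalizing u v
    · simpa only [G.adj_comm] using (this v u huv.symm (huv.lt_or_gt.resolve_left h)).symm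
    obtain ⟨j, rfl⟩ := Fin.exists_succ_eq.2 (Fin.ne_zero_of_lt h)
    cases u using Fin.cases with
    | zero =>
      simpa [c, r] using (fanCenter_contact_center hρ.ge j.2.le).of_iff
        (adj_zero_succ_iff_fanSpokeAt G j).symm
    | succ i =>
      have hij := Fin.succ_lt_succ_iff.1 h
      simpa [c, r] using (fanCenter_contact hρ.ge hij j.2.le).of_iff
        (adj_succ_succ_iff_fanRimAt hG hij).symm
  · obtain ⟨j, rfl⟩ := Fin.exists_succ_eq.2 hv
    suffices Disjoint (Metric.closedBall (c u) (r u))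
        {p | |p 0 - c j.succ 0| ≤ r j.succ ∧ c j.succ 1 < p 1} from
      this.mono_right <| Set.ofPred_subset_ofPred.2 fun _ hp => ⟨hp.1, hp.2.1⟩
    cases u using Fin.cases with
    | zero =>
      exact (disjoint_closedBall_halfPlane_above _ _).mono_right
        fun p hp => by simpa [c, r, fanCenter] using hp.2
    | succ i =>
      simpa [c, r] using
        fanCenter_disjoint_strip hρ.ge (fun h => huv (congrArg Fin.succ (Fin.ext h))) i.2.le j.2.le

/-- Every subgraph of a fan admits a circle-contact representation in which, for each
circle representing a vertex other than the center, the part of its vertical strip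
lying above the circle is empty (disjoint from all the other disks). -/
theorem subgraph_of_fan_circle_contact_empty_strips
    (n : ℕ) (hn : 1 ≤ n) (G : SimpleGraph (Fin (n + 1)))
    (hG : ∀ u v, G.Adj u v → (fanGraph n).Adj u v) :
    ∃ (c : Fin (n + 1) → EuclideanSpace ℝ (Fin 2)) (r : Fin (n + 1) → ℝ),
      (∀ v, 0 < r v) ∧
      (∀ u v, u ≠ v →
        r u + r v ≤ dist (c u) (c v) ∧ (dist (c u) (c v) = r u + r v ↔ G.Adj u v)) ∧
      (∀ v, v ≠ 0 → ∀ u, u ≠ v →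
        Disjoint (Metric.closedBall (c u) (r u))
          {p : EuclideanSpace ℝ (Fin 2) |
            |p 0 - c v 0| ≤ r v ∧ c v 1 < p 1 ∧ r v < dist p (c v)}) :=
  subgraph_of_fan_circle_contact_empty_strips_general n G hG
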